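/- Let G = ℤ₂ⁿ with q = 2ⁿ, and for x ∈ G let ‖x‖ denote the number of coordinates of x equal to 1. Let B_k = {x ∈ G : ‖x‖ ≤ k} and A_k = {x ∈ G : ‖x‖ > k} ∪ {0}. Assume n/2 − 1 < k ≤ n. Then λ±(B_k) ≤ (2k+2)/(q(2k+2−n)) and λ±(A_k) ≥ 1 − n/(2k+2). -/

import Mathlib

open scoped Pointwise ComplexOrder

noncomputable section

def IsStandard {G : Type*} [AddCommGroup G] (A : Set G) : Prop :=
  A = -A ∧ (0 : G) ∈ A

def Delta {G : Type*} [AddCommGroup G] (A : Set G) : ℕ :=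
  sSup {n | ∃ B : Finset G, ((B : Set G) - (B : Set G)) ∩ A = {0} ∧ B.card = n}

def DeltaBar {G : Type*} [AddCommGroup G] (A : Set G) : ℕ :=
  sSup {n | ∃ B : Finset G, ((B : Set G) - (B : Set G)) ⊆ A ∧ B.card = n}

def deltaL {G : Type*} [AddCommGroup G] [Fintype G] (A : Set G) : ℝ :=
  (Delta A : ℝ) / (Fintype.card G : ℝ)

def deltaU {G : Type*} [AddCommGroup G] (A : Set G) : ℝ :=
  1 / (DeltaBar A : ℝ)

def ftrans {G : Type*} [AddCommGroup G] [Fintype G] (f : G → ℝ) (γ : AddChar G Circle) : ℂ :=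
  ∑ x, (γ x : ℂ) * (f x : ℂ)

def PosFT {G : Type*} [AddCommGroup G] [Fintype G] (f : G → ℝ) : Prop :=
  ∀ γ : AddChar G Circle, 0 ≤ ftrans f γ

def lamSet {G : Type*} [AddCommGroup G] [Fintype G] (S : Set (G → ℝ)) : Set ℝ :=
  {r | ∃ f ∈ S, PosFT f ∧ (∑ x, f x) ≠ 0 ∧ r = f 0 / ∑ x, f x}

def lam {G : Type*} [AddCommGroup G] [Fintype G] (A : Set G) : ℝ :=
  sInf (lamSet {f | f ≠ 0 ∧ ∀ x ∉ A, f x = 0})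

def lamMinus {G : Type*} [AddCommGroup G] [Fintype G] (A : Set G) : ℝ :=
  sInf (lamSet {f | f ≠ 0 ∧ ∀ x ∉ A, f x ≤ 0})

def lamPlus {G : Type*} [AddCommGroup G] [Fintype G] (A : Set G) : ℝ :=
  sInf (lamSet {f | f ≠ 0 ∧ (∀ x ∉ A, f x = 0) ∧ ∀ x ∈ A, 0 ≤ f x})

def lamPM {G : Type*} [AddCommGroup G] [Fintype G] (A : Set G) : ℝ :=
  sInf (lamSet {f | f ≠ 0 ∧ (∀ x ∉ A, f x ≤ 0) ∧ ∀ x ∈ A, 0 ≤ f x})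

/-!
The function `g x = k + 1 - ‖x‖` equals `(k + 1 - n/2) + (1/2) ∑ᵢ (-1)^{xᵢ}`, a nonnegative
combination of characters of `ℤ₂ⁿ` once `k > n/2 - 1`; hence `ĝ ≥ 0`. It is `≥ 0` on `B_k`,
`≤ 0` off it, with `g 0 = k + 1` and `ĝ(𝟙) = q (k + 1 - n/2)`, which gives the upper bound for
`λ±(B_k)`. For `A_k` it serves as a dual certificate: for admissible `f`, `f g ≤ 0` away from `0`,
while `∑ f g = (k + 1 - n/2) f̂(𝟙) + (1/2) ∑ᵢ f̂(χᵢ) ≥ (k + 1 - n/2) f̂(𝟙)`.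
-/

section FourierPositivity

variable {G : Type*} [AddCommGroup G] [Fintype G]

lemma sum_addChar_nonneg (ψ : AddChar G ℂ) : 0 ≤ ∑ x, ψ x := by
  classical
  rw [AddChar.sum_eq_ite]
  split_ifs
  · exact_mod_cast Nat.cast_nonneg _
  · exact le_rfl

lemma ftrans_one (f : G → ℝ) : ftrans f 1 = ((∑ x, f x : ℝ) : ℂ) := by
  simp [ftrans]

lemma ftrans_add (f g : G → ℝ) (γ : AddChar G Circle) :
    ftrans (f + g) γ = ftrans f γ + ftrans g γ := by
  simp [ftrans, mul_add, Finset.sum_add_distrib]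

lemma ftrans_smul (c : ℝ) (f : G → ℝ) (γ : AddChar G Circle) :
    ftrans (c • f) γ = c * ftrans f γ := by
  simp [ftrans, Finset.mul_sum, mul_left_comm]

lemma ftrans_sum {ι : Type*} (s : Finset ι) (f : ι → G → ℝ) (γ : AddChar G Circle) :
    ftrans (∑ i ∈ s, f i) γ = ∑ i ∈ s, ftrans (f i) γ := by
  simp only [ftrans, Finset.sum_apply, Complex.ofReal_sum, Finset.mul_sum]
  exact Finset.sum_comm

lemma PosFT.add {f g : G → ℝ} (hf : PosFT f) (hg : PosFT g) : PosFT (f + g) :=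
  fun γ => (ftrans_add f g γ).symm ▸ add_nonneg (hf γ) (hg γ)

lemma PosFT.smul {c : ℝ} (hc : 0 ≤ c) {f : G → ℝ} (hf : PosFT f) : PosFT (c • f) :=
  fun γ => (ftrans_smul c f γ).symm ▸ mul_nonneg (Complex.zero_le_real.mpr hc) (hf γ)

lemma posFT_sum {ι : Type*} (s : Finset ι) {f : ι → G → ℝ} (hf : ∀ i ∈ s, PosFT (f i)) :
    PosFT (∑ i ∈ s, f i) :=
  fun γ => (ftrans_sum s f γ).symm ▸ Finset.sum_nonneg fun i hi => hf i hi γ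

-- `ftrans r γ` is the character sum of `γ χ`, which is `|G|` or `0`.
lemma posFT_of_addChar {χ : AddChar G Circle} {r : G → ℝ} (hr : ∀ x, (χ x : ℂ) = r x) :
    PosFT r := fun γ => by
  simp only [ftrans, ← hr]
  exact sum_addChar_nonneg (Circle.coeHom.compAddChar (γ * χ))

lemma PosFT.sum_mul_nonneg {f : G → ℝ} (hf : PosFT f) {χ : AddChar G Circle} {r : G → ℝ}
    (hr : ∀ x, (χ x : ℂ) = r x) : 0 ≤ ∑ x, r x * f x := by
  have h := hf χ
  simp only [ftrans, hr] at h
  exact_mod_cast h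

lemma PosFT.sum_pos {f : G → ℝ} (hf : PosFT f) (hne : ∑ x, f x ≠ 0) : 0 < ∑ x, f x := by
  have h := hf 1
  rw [ftrans_one] at h
  exact (Complex.zero_le_real.mp h).lt_of_ne' hne

lemma posFT_single_zero [DecidableEq G] : PosFT (Pi.single 0 1 : G → ℝ) := fun γ => by
  simp [ftrans, Pi.single_apply, apply_ite (fun r : ℝ => (r : ℂ))]

end FourierPositivity

section Duality

variable {G : Type*} [AddCommGroup G] [Fintype G] {A : Set G}

lemma lamPM_le {f : G → ℝ} (h0 : (0 : G) ∈ A) (hout : ∀ x ∉ A, f x ≤ 0)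
    (hin : ∀ x ∈ A, 0 ≤ f x) (hf : PosFT f) (hs : ∑ x, f x ≠ 0) :
    lamPM A ≤ f 0 / ∑ x, f x := by
  refine csInf_le ⟨0, ?_⟩ ⟨f, ⟨fun h => hs (by simp [h]), hout, hin⟩, hf, hs, rfl⟩
  rintro _ ⟨f', ⟨-, -, hin'⟩, hf', hs', rfl⟩
  exact div_nonneg (hin' 0 h0) (hf'.sum_pos hs').le

-- Away from `0`, `g` has the opposite sign to every admissible `f`, so `∑ f g ≤ f 0 * g 0`.
lemma le_lamPM {g : G → ℝ} {c : ℝ} (h0 : (0 : G) ∈ A) (hg0 : 0 < g 0)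
    (hin : ∀ x ∈ A, x ≠ 0 → g x ≤ 0) (hout : ∀ x ∉ A, 0 ≤ g x)
    (hdual : ∀ f : G → ℝ, PosFT f → c * ∑ x, f x ≤ ∑ x, f x * g x) :
    c / g 0 ≤ lamPM A := by
  classical
  refine le_csInf ⟨1, (Pi.single 0 1 : G → ℝ), ⟨?_, ?_, ?_⟩, posFT_single_zero, by simp, by simp⟩ ?_
  · exact fun h => by simpa using congr_fun h 0
  · intro x hx
    have hx0 : x ≠ 0 := by rintro rfl; exact hx h0
    simp [hx0]
  · intro x _
    rw [Pi.single_apply]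
    positivity
  rintro _ ⟨f, ⟨-, hfout, hfin⟩, hf, hs, rfl⟩
  have hcorr : ∑ x, f x * g x ≤ f 0 * g 0 := by
    rw [← Finset.add_sum_erase _ _ (Finset.mem_univ 0), add_le_iff_nonpos_right]
    refine Finset.sum_nonpos fun x hx => ?_
    by_cases hA : x ∈ A
    · exact mul_nonpos_of_nonneg_of_nonpos (hfin x hA) (hin x hA (Finset.ne_of_mem_erase hx))
    · exact mul_nonpos_of_nonpos_of_nonneg (hfout x hA) (hout x hA)
  rw [div_le_div_iff₀ hg0 (hf.sum_pos hs)]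
  linarith [hdual f hf]

end Duality

section BooleanCube

variable {n : ℕ}

def zmodTwoSign (a : ZMod 2) : ℝ := if a = 0 then 1 else -1

lemma coe_toCircle_zmodTwo (a : ZMod 2) : (ZMod.toCircle a : ℂ) = zmodTwoSign a := by
  obtain rfl | rfl : a = 0 ∨ a = 1 := by revert a; decide
  · simp [zmodTwoSign]
  · rw [show (1 : ZMod 2) = ((1 : ℕ) : ZMod 2) by rfl, ZMod.toCircle_natCast,
      show 2 * (Real.pi : ℂ) * Complex.I * ((1 : ℕ) : ℂ) / ((2 : ℕ) : ℂ) = Real.pi * Complex.I by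
        push_cast; ring]
    simp [zmodTwoSign, Complex.exp_pi_mul_I]

def coordChar (n : ℕ) (i : Fin n) : AddChar (Fin n → ZMod 2) Circle :=
  ZMod.toCircle.compAddMonoidHom (Pi.evalAddMonoidHom (fun _ => ZMod 2) i)

lemma coe_coordChar (i : Fin n) (x : Fin n → ZMod 2) :
    (coordChar n i x : ℂ) = zmodTwoSign (x i) :=
  coe_toCircle_zmodTwo _

lemma sum_zmodTwoSign_apply (i : Fin n) : ∑ x : Fin n → ZMod 2, zmodTwoSign (x i) = 0 := by
  have hne : Circle.coeHom.compAddChar (coordChar n i) ≠ 0 := fun h => by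
    have h1 : ((coordChar n i (Pi.single i 1) : Circle) : ℂ) = 1 := DFunLike.congr_fun h _
    norm_num [coe_coordChar, zmodTwoSign] at h1
  have h := AddChar.sum_eq_zero_iff_ne_zero.mpr hne
  change ∑ x, ((coordChar n i x : Circle) : ℂ) = 0 at h
  simp only [coe_coordChar] at h
  exact_mod_cast h

def weight (x : Fin n → ZMod 2) : ℕ := (Finset.univ.filter fun i => x i = 1).card

lemma weight_eq_sum (x : Fin n → ZMod 2) :
    (weight x : ℝ) = ∑ i, (1 - zmodTwoSign (x i)) / 2 := by
  rw [weight, Finset.card_filter, Nat.cast_sum]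
  refine Finset.sum_congr rfl fun i _ => ?_
  obtain h | h : x i = 0 ∨ x i = 1 := by generalize x i = a; revert a; decide
  all_goals simp [h, zmodTwoSign]

def slack (k : ℕ) (x : Fin n → ZMod 2) : ℝ := k + 1 - weight x

lemma slack_eq (k : ℕ) (x : Fin n → ZMod 2) :
    slack k x = (k + 1 - n / 2) + ∑ i, zmodTwoSign (x i) / 2 := by
  simp only [slack, weight_eq_sum, sub_div, Finset.sum_sub_distrib, Finset.sum_const,
    Finset.card_univ, Fintype.card_fin, nsmul_eq_mul]
  ring

lemma slack_zero (k : ℕ) : slack k (0 : Fin n → ZMod 2) = k + 1 := by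
  simp [slack, weight]

lemma slack_nonneg {k : ℕ} {x : Fin n → ZMod 2} (h : weight x ≤ k) : 0 ≤ slack k x := by
  rw [slack, sub_nonneg]
  exact_mod_cast h.trans k.le_succ

lemma slack_nonpos {k : ℕ} {x : Fin n → ZMod 2} (h : k < weight x) : slack k x ≤ 0 := by
  rw [slack, sub_nonpos]
  exact_mod_cast h

lemma sum_slack (k : ℕ) : ∑ x : Fin n → ZMod 2, slack k x = 2 ^ n * (k + 1 - n / 2) := by
  have h : ∑ x : Fin n → ZMod 2, ∑ i, zmodTwoSign (x i) = 0 := by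
    rw [Finset.sum_comm]
    simp [sum_zmodTwoSign_apply]
  simp [slack_eq, Finset.sum_add_distrib, ← Finset.sum_div, h, ZMod.card]
  ring

lemma posFT_slack {k : ℕ} (hk : (n : ℝ) / 2 - 1 ≤ k) : PosFT (slack (n := n) k) := by
  have h : slack (n := n) k =
      (k + 1 - n / 2 : ℝ) • 1 + ∑ i, (1 / 2 : ℝ) • fun x => zmodTwoSign (x i) := by
    ext x
    simp [slack_eq, Finset.sum_apply, div_eq_inv_mul]
  rw [h]
  refine (PosFT.smul (by linarith) (posFT_of_addChar (χ := 1) fun _ => ?_)).add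
    (posFT_sum _ fun i _ => PosFT.smul (by norm_num) (posFT_of_addChar (coe_coordChar i)))
  simp

lemma mul_sum_le_sum_mul_slack (k : ℕ) {f : (Fin n → ZMod 2) → ℝ} (hf : PosFT f) :
    (k + 1 - n / 2) * ∑ x, f x ≤ ∑ x, f x * slack k x := by
  have hsign (i : Fin n) : 0 ≤ ∑ x, zmodTwoSign (x i) * f x := hf.sum_mul_nonneg (coe_coordChar i)
  have h : ∑ x, f x * slack k x =
      (k + 1 - n / 2) * ∑ x, f x + ∑ i, (∑ x, zmodTwoSign (x i) * f x) / 2 := by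
    simp only [slack_eq, mul_add, Finset.sum_add_distrib, Finset.mul_sum, Finset.sum_div]
    rw [Finset.sum_comm]
    congr 1
    · exact Finset.sum_congr rfl fun x _ => mul_comm _ _
    · exact Finset.sum_congr rfl fun i _ => Finset.sum_congr rfl fun x _ => by ring
  rw [h]
  linarith [Finset.sum_nonneg fun i (_ : i ∈ Finset.univ) => div_nonneg (hsign i) zero_le_two]

lemma lamPM_setOf_weight_le {k : ℕ} (hk : (n : ℝ) / 2 - 1 < k) :
    lamPM {x : Fin n → ZMod 2 | weight x ≤ k} ≤ (k + 1) / (2 ^ n * (k + 1 - n / 2)) := by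
  have hc : (0 : ℝ) < k + 1 - n / 2 := by linarith
  have h := lamPM_le (A := {x : Fin n → ZMod 2 | weight x ≤ k}) (f := slack k)
    (by simp [weight]) (fun x hx => slack_nonpos (not_le.mp hx)) (fun x hx => slack_nonneg hx)
    (posFT_slack hk.le) (by rw [sum_slack]; positivity)
  rwa [slack_zero, sum_slack] at h

lemma le_lamPM_setOf_lt_weight (k : ℕ) :
    (k + 1 - n / 2) / (k + 1) ≤ lamPM ({x : Fin n → ZMod 2 | k < weight x} ∪ {0}) := by
  have h := le_lamPM (A := {x : Fin n → ZMod 2 | k < weight x} ∪ {0}) (g := slack k)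
    (Or.inr rfl) (by rw [slack_zero]; positivity)
    (fun x hx hx0 => slack_nonpos (hx.resolve_right hx0))
    (fun x hx => slack_nonneg (not_lt.mp fun h => hx (Or.inl h)))
    (fun f hf => mul_sum_le_sum_mul_slack k hf)
  rwa [slack_zero] at h

end BooleanCube

theorem stmt19_general (n : ℕ) (k : ℕ)
    (normG : (Fin n → ZMod 2) → ℕ)
    (hnorm : normG = fun x => (Finset.univ.filter fun i => x i = 1).card)
    (Bk Ak : Set (Fin n → ZMod 2))
    (hBk : Bk = {x | normG x ≤ k})
    (hAk : Ak = {x | k < normG x} ∪ {0})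
    (hk1 : (n : ℝ) / 2 - 1 < (k : ℝ)) :
    lamPM Bk ≤ (2 * (k : ℝ) + 2) / ((2 ^ n : ℝ) * (2 * (k : ℝ) + 2 - (n : ℝ))) ∧
    1 - (n : ℝ) / (2 * (k : ℝ) + 2) ≤ lamPM Ak := by
  subst hnorm hBk hAk
  have hc : (0 : ℝ) < k + 1 - n / 2 := by linarith
  constructor
  · refine (lamPM_setOf_weight_le hk1).trans_eq ?_
    have h2 : (0 : ℝ) < 2 * k + 2 - n := by linarith
    rw [div_eq_div_iff (mul_pos (by positivity) hc).ne' (mul_pos (by positivity) h2).ne']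
    ring
  · refine le_of_eq_of_le ?_ (le_lamPM_setOf_lt_weight k)
    field_simp

theorem stmt19 (n : ℕ) (k : ℕ)
    (normG : (Fin n → ZMod 2) → ℕ)
    (hnorm : normG = fun x => (Finset.univ.filter fun i => x i = 1).card)
    (Bk Ak : Set (Fin n → ZMod 2))
    (hBk : Bk = {x | normG x ≤ k})
    (hAk : Ak = {x | k < normG x} ∪ {0})
    (hk1 : (n : ℝ) / 2 - 1 < (k : ℝ)) (hk2 : k ≤ n) :
    lamPM Bk ≤ (2 * (k : ℝ) + 2) / ((2 ^ n : ℝ) * (2 * (k : ℝ) + 2 - (n : ℝ))) ∧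
    1 - (n : ℝ) / (2 * (k : ℝ) + 2) ≤ lamPM Ak :=
  stmt19_general n k normG hnorm Bk Ak hBk hAk hk1
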